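/- Suppose (s_n) is a sequence of nonnegative reals satisfying s_{n+1} − s_n = (F(s_n) + r_n)/(n+1) with F(s) = b(s−λ₁)(s−λ₂), b > 0, λ₁ < λ₂, r_n → 0, and suppose s_n < λ₂ − ε for all large n and some ε > 0. Then s_n → λ₁ as n → ∞. -/
import Mathlib


open Filter

/-- If a sequence decreases by at least `c/(n+1)` whenever it is `≥ t` (from index `m` on),
then it must eventually drop below `t`. -/
lemma exists_lt_of_decr (s : ℕ → ℝ) (c t : ℝ) (hc : 0 < c) (m : ℕ)
    (h : ∀ n, m ≤ n → t ≤ s n → s (n + 1) ≤ s n - c / (n + 1)) :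
    ∃ k, m ≤ k ∧ s k < t := by
  by_contra hcon
  push_neg at hcon
  have key : ∀ k, s (m + k) ≤ s m -
      c * (∑ i ∈ Finset.range (m + k), (1 / (i + 1) : ℝ) - ∑ i ∈ Finset.range m, (1 / (i + 1) : ℝ)) := by
    intro k
    induction k with
    | zero => simp
    | succ k ih =>
      have hmk : m ≤ m + k := Nat.le_add_right _ _
      have h1 : s (m + k + 1) ≤ s (m + k) - c / ((m + k : ℕ) + 1) :=
        h (m + k) hmk (hcon _ hmk)
      have h2 : ∑ i ∈ Finset.range (m + (k + 1)), (1 / (i + 1) : ℝ)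
          = ∑ i ∈ Finset.range (m + k), (1 / (i + 1) : ℝ) + 1 / ((m + k : ℕ) + 1) := by
        have e : m + (k + 1) = (m + k) + 1 := by ring
        rw [e, Finset.sum_range_succ]
      have e : m + (k + 1) = (m + k) + 1 := by ring
      rw [e] at h2
      rw [e, h2]
      have hpos : (0:ℝ) < ((m + k : ℕ) : ℝ) + 1 := by positivity
      have : c / ((m + k : ℕ) + 1) = c * (1 / ((m + k : ℕ) + 1)) := by ring
      rw [this] at h1
      linarith
  have hdiv := Real.tendsto_sum_range_one_div_nat_succ_atTop
  obtain ⟨K, hK⟩ := (Filter.tendsto_atTop.1 hdiv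
    ((∑ i ∈ Finset.range m, (1 / (i + 1) : ℝ)) + (s m - t) / c + 1)).exists_forall_of_atTop
  have hbig := hK (m + K) (Nat.le_add_left _ _)
  have hkey := key K
  have hlow := hcon (m + K) (Nat.le_add_right _ _)
  have : t ≤ s m - c * ((s m - t) / c + 1) := by nlinarith
  rw [mul_add, mul_one, mul_div_cancel₀ _ (ne_of_gt hc)] at this
  linarith

/-- Symmetric version: must eventually rise above `t`. -/
lemma exists_gt_of_incr (s : ℕ → ℝ) (c t : ℝ) (hc : 0 < c) (m : ℕ)
    (h : ∀ n, m ≤ n → s n ≤ t → s n + c / (n + 1) ≤ s (n + 1)) :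
    ∃ k, m ≤ k ∧ t < s k := by
  obtain ⟨k, hk, hk'⟩ := exists_lt_of_decr (fun n => -s n) c (-t) hc m (by
    intro n hn hts
    have := h n hn (by linarith)
    linarith)
  exact ⟨k, hk, by simpa using hk'⟩

/-- Deterministic stochastic-approximation convergence to the stable fixed
point `λ₁`. -/
theorem stochastic_approximation_to_stable_root (b lam₁ lam₂ : ℝ) (hb : 0 < b)
    (hlt : lam₁ < lam₂) (F : ℝ → ℝ) (hF : ∀ s, F s = b * (s - lam₁) * (s - lam₂))
    (s : ℕ → ℝ) (r : ℕ → ℝ) (hs0 : ∀ n, 0 ≤ s n)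
    (hrec : ∀ n, s (n + 1) = s n + (F (s n) + r n) / (n + 1))
    (hr : Tendsto r atTop (nhds 0))
    (ε : ℝ) (hε : 0 < ε) (N : ℕ) (hbound : ∀ n, N ≤ n → s n ≤ lam₂ - ε) :
    Tendsto s atTop (nhds lam₁) := by
  have hl2 : 0 < lam₂ := lt_of_lt_of_le hε (by linarith [hs0 N, hbound N le_rfl])
  set M : ℝ := b * (lam₂ + |lam₁|) * lam₂ with hM_def
  have hM : ∀ n, N ≤ n → |F (s n)| ≤ M := by
    intro n hn
    have h1 := hs0 n
    have h2 := hbound n hn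
    rw [hF, abs_mul, abs_mul, abs_of_pos hb]
    have e1 : |s n - lam₁| ≤ lam₂ + |lam₁| := by
      rw [abs_le]
      constructor
      · nlinarith [neg_abs_le lam₁, le_abs_self lam₁]
      · nlinarith [neg_abs_le lam₁, le_abs_self lam₁]
    have e2 : |s n - lam₂| ≤ lam₂ := by
      rw [abs_le]; constructor <;> nlinarith
    have h4 : (0:ℝ) ≤ |s n - lam₂| := abs_nonneg _
    rw [hM_def, mul_assoc, mul_assoc]
    exact mul_le_mul_of_nonneg_left
      (mul_le_mul e1 e2 h4 (by nlinarith [abs_nonneg lam₁])) hb.le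
  -- step-size bound
  have hstep : ∀ (R : ℝ) (n : ℕ), 0 ≤ R → N ≤ n → |r n| ≤ R →
      |s (n + 1) - s n| ≤ (M + R) / (n + 1) := by
    intro R n hR hn hrn
    have hpos : (0:ℝ) < (n:ℝ) + 1 := by positivity
    rw [hrec n]
    have e : s n + (F (s n) + r n) / (n + 1) - s n = (F (s n) + r n) / (n + 1) := by ring
    rw [e, abs_div, abs_of_pos hpos]
    apply div_le_div_of_nonneg_right ?_ hpos.le |>.trans_eq rfl
    calc |F (s n) + r n| ≤ |F (s n)| + |r n| := abs_add_le _ _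
      _ ≤ M + R := add_le_add (hM n hn) hrn
  have key_up : ∀ δ : ℝ, 0 < δ → ∃ K, ∀ n, K ≤ n → s n < lam₁ + δ := by
    intro δ hδ
    set c : ℝ := b * (δ / 2) * ε with hc_def
    have hc : 0 < c := by positivity
    obtain ⟨N₂, hN₂⟩ := (Metric.tendsto_atTop.1 hr (c / 2) (by positivity))
    have hr' : ∀ n, N₂ ≤ n → |r n| ≤ c / 2 := fun n hn =>
      le_of_lt (by simpa [Real.dist_eq] using hN₂ n hn)
    have hsm : Tendsto (fun n : ℕ => (M + c / 2) * (1 / ((n : ℝ) + 1))) atTop (nhds 0) := by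
      simpa using (tendsto_one_div_add_atTop_nhds_zero_nat.const_mul (M + c / 2))
    obtain ⟨N₃, hN₃⟩ := (hsm.eventually_lt_const (half_pos hδ)).exists_forall_of_atTop
    set n₀ := max N (max N₂ N₃) with hn₀_def
    have hn₀N : N ≤ n₀ := le_max_left _ _
    have hn₀2 : N₂ ≤ n₀ := le_trans (le_max_left _ _) (le_max_right _ _)
    have hn₀3 : N₃ ≤ n₀ := le_trans (le_max_right _ _) (le_max_right _ _)
    have hdec : ∀ n, n₀ ≤ n → lam₁ + δ / 2 ≤ s n → s (n + 1) ≤ s n - (c / 2) / (n + 1) := by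
      intro n hn hsn
      have h2 := hbound n (le_trans hn₀N hn)
      have hFle : F (s n) ≤ -c := by
        rw [hF, hc_def]
        have t1 : δ / 2 ≤ s n - lam₁ := by linarith
        have t2 : ε ≤ lam₂ - s n := by linarith
        have t3 : (δ / 2) * ε ≤ (s n - lam₁) * (lam₂ - s n) :=
          mul_le_mul t1 t2 hε.le (by linarith)
        nlinarith
      have hrn := (abs_le.1 (hr' n (le_trans hn₀2 hn))).2
      have hpos : (0:ℝ) < (n:ℝ) + 1 := by positivity
      rw [hrec n]
      have h3 : (F (s n) + r n) / (n + 1) ≤ (-(c / 2)) / (n + 1) := by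
        apply div_le_div_of_nonneg_right ?_ hpos.le |>.trans_eq rfl
        linarith
      have h4 : (-(c / 2)) / ((n:ℝ) + 1) = -((c / 2) / (n + 1)) := by ring
      rw [h4] at h3
      linarith
    obtain ⟨m, hm, hsm'⟩ := exists_lt_of_decr s (c / 2) (lam₁ + δ / 2) (by positivity) n₀ hdec
    have hmain : ∀ k, s (m + k) < lam₁ + δ := by
      intro k
      induction k with
      | zero => simpa using lt_of_lt_of_le hsm' (by linarith)
      | succ k ih =>
        have hn : n₀ ≤ m + k := le_trans hm (Nat.le_add_right _ _)
        have e : m + (k + 1) = (m + k) + 1 := by ring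
        rw [e]
        by_cases hcase : lam₁ + δ / 2 ≤ s (m + k)
        · have h5 := hdec (m + k) hn hcase
          have hpos : (0:ℝ) < ((m + k : ℕ):ℝ) + 1 := by positivity
          have : (0:ℝ) < (c / 2) / (((m + k : ℕ):ℝ) + 1) := by positivity
          linarith
        · push_neg at hcase
          have h5 := hstep (c / 2) (m + k) (by positivity) (le_trans hn₀N hn)
            (hr' (m + k) (le_trans hn₀2 hn))
          have h6 := hN₃ (m + k) (le_trans hn₀3 hn)
          have h7 : (M + c / 2) / (((m + k : ℕ):ℝ) + 1)
              = (M + c / 2) * (1 / (((m + k : ℕ):ℝ) + 1)) := by ring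
          rw [h7] at h5
          have h8 := (abs_le.1 h5).2
          linarith
    refine ⟨m, fun n hn => ?_⟩
    obtain ⟨k, rfl⟩ := Nat.exists_eq_add_of_le hn
    exact hmain k
  have key_dn : ∀ δ : ℝ, 0 < δ → ∃ K, ∀ n, K ≤ n → lam₁ - δ < s n := by
    intro δ hδ
    by_cases hl : lam₁ - δ < 0
    · exact ⟨0, fun n _ => lt_of_lt_of_le hl (hs0 n)⟩
    push_neg at hl
    set c : ℝ := b * (δ / 2) * (lam₂ - lam₁) with hc_def
    have hc : 0 < c := by
      have := sub_pos.2 hlt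
      positivity
    obtain ⟨N₂, hN₂⟩ := (Metric.tendsto_atTop.1 hr (c / 2) (by positivity))
    have hr' : ∀ n, N₂ ≤ n → |r n| ≤ c / 2 := fun n hn =>
      le_of_lt (by simpa [Real.dist_eq] using hN₂ n hn)
    have hsm : Tendsto (fun n : ℕ => (M + c / 2) * (1 / ((n : ℝ) + 1))) atTop (nhds 0) := by
      simpa using (tendsto_one_div_add_atTop_nhds_zero_nat.const_mul (M + c / 2))
    obtain ⟨N₃, hN₃⟩ := (hsm.eventually_lt_const (half_pos hδ)).exists_forall_of_atTop
    set n₀ := max N (max N₂ N₃) with hn₀_def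
    have hn₀N : N ≤ n₀ := le_max_left _ _
    have hn₀2 : N₂ ≤ n₀ := le_trans (le_max_left _ _) (le_max_right _ _)
    have hn₀3 : N₃ ≤ n₀ := le_trans (le_max_right _ _) (le_max_right _ _)
    have hinc : ∀ n, n₀ ≤ n → s n ≤ lam₁ - δ / 2 → s n + (c / 2) / (n + 1) ≤ s (n + 1) := by
      intro n hn hsn
      have h1 := hs0 n
      have hFge : c ≤ F (s n) := by
        rw [hF, hc_def]
        have t1 : δ / 2 ≤ lam₁ - s n := by linarith
        have t2 : lam₂ - lam₁ ≤ lam₂ - s n := by linarith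
        have t3 : (δ / 2) * (lam₂ - lam₁) ≤ (lam₁ - s n) * (lam₂ - s n) :=
          mul_le_mul t1 t2 (by linarith) (by linarith)
        nlinarith
      have hrn := (abs_le.1 (hr' n (le_trans hn₀2 hn))).1
      have hpos : (0:ℝ) < (n:ℝ) + 1 := by positivity
      rw [hrec n]
      have h3 : (c / 2) / ((n:ℝ) + 1) ≤ (F (s n) + r n) / (n + 1) := by
        apply div_le_div_of_nonneg_right ?_ hpos.le |>.trans_eq rfl
        linarith
      linarith
    obtain ⟨m, hm, hsm'⟩ := exists_gt_of_incr s (c / 2) (lam₁ - δ / 2) (by positivity) n₀ hinc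
    have hmain : ∀ k, lam₁ - δ < s (m + k) := by
      intro k
      induction k with
      | zero => simpa using lt_of_le_of_lt (by linarith : lam₁ - δ ≤ lam₁ - δ / 2) hsm'
      | succ k ih =>
        have hn : n₀ ≤ m + k := le_trans hm (Nat.le_add_right _ _)
        have e : m + (k + 1) = (m + k) + 1 := by ring
        rw [e]
        by_cases hcase : s (m + k) ≤ lam₁ - δ / 2
        · have h5 := hinc (m + k) hn hcase
          have : (0:ℝ) < (c / 2) / (((m + k : ℕ):ℝ) + 1) := by positivity
          linarith
        · push_neg at hcase
          have h5 := hstep (c / 2) (m + k) (by positivity) (le_trans hn₀N hn)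
            (hr' (m + k) (le_trans hn₀2 hn))
          have h6 := hN₃ (m + k) (le_trans hn₀3 hn)
          have h7 : (M + c / 2) / (((m + k : ℕ):ℝ) + 1)
              = (M + c / 2) * (1 / (((m + k : ℕ):ℝ) + 1)) := by ring
          rw [h7] at h5
          have h8 := (abs_le.1 h5).1
          linarith
    refine ⟨m, fun n hn => ?_⟩
    obtain ⟨k, rfl⟩ := Nat.exists_eq_add_of_le hn
    exact hmain k
  rw [Metric.tendsto_atTop]
  intro δ hδ
  obtain ⟨K₁, hK₁⟩ := key_up δ hδ
  obtain ⟨K₂, hK₂⟩ := key_dn δ hδ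
  refine ⟨max K₁ K₂, fun n hn => ?_⟩
  have h1 := hK₁ n (le_trans (le_max_left _ _) hn)
  have h2 := hK₂ n (le_trans (le_max_right _ _) hn)
  rw [Real.dist_eq, abs_lt]
  constructor <;> linarith
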